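/- arXiv:2305.00408 — 6 statements merged into one kernel-verified Lean document; each statement's English description precedes it below -/
import Mathlib

section
/- Let p be an odd prime, m ≥ 1, and C an m×m matrix over F_p, c ∈ F_p^m. Let r = rank(C + Cᵀ) over F_p. Then |∑_{x ∈ F_p^m} ω^{x C xᵀ + c·x}|² ≤ p^{2m - r}, where ω = e^(2πi/p). -/
/-!
Write `Q x = x ⬝ᵥ C *ᵥ x + c ⬝ᵥ x` and `ψ` for a primitive additive character. Expanding
`|∑ ψ (Q x)|²` and substituting `x = y + h` makes the phase linear in `y`, since
`Q (y + h) - Q y = (C + Cᵀ) h ⬝ᵥ y + Q h`. Summing over `y` kills every `h` outside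
`ker (C + Cᵀ)`, so `|∑ ψ (Q x)|² = q^n |∑_{h ∈ ker} ψ (Q h)| ≤ q^n · q^(n - r)`.
-/

open scoped BigOperators Matrix

noncomputable def omegaP (p : ℕ) : ℂ := Complex.exp (2 * Real.pi * Complex.I / p)

open Finset Matrix

section Ring

variable {R ι : Type*} [CommRing R] [Fintype R] [DecidableEq R] [Fintype ι] [DecidableEq ι]

theorem AddChar.IsPrimitive.sum_apply_dotProduct {ψ : AddChar R ℂ} (hψ : ψ.IsPrimitive)
    (v : ι → R) :
    ∑ y, ψ (v ⬝ᵥ y) = if v = 0 then (Fintype.card R ^ Fintype.card ι : ℂ) else 0 := by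
  split_ifs with hv
  · simp [hv]
  obtain ⟨i, hi⟩ := Function.ne_iff.mp hv
  obtain ⟨t, ht⟩ := AddChar.ne_one_iff.mp (hψ hi)
  have hne : ψ.compAddMonoidHom (AddMonoidHom.mk' (v ⬝ᵥ ·) (dotProduct_add v)) ≠ 0 :=
    AddChar.ne_zero_iff.mpr ⟨Pi.single i t, by simpa [dotProduct_single, mul_comm] using ht⟩
  simpa [hne] using (ψ.compAddMonoidHom (AddMonoidHom.mk' (v ⬝ᵥ ·) (dotProduct_add v))).sum_eq_ite

omit [Fintype R] [DecidableEq R] [DecidableEq ι] in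
theorem Matrix.quadratic_add_sub (C : Matrix ι ι R) (c y h : ι → R) :
    (y + h) ⬝ᵥ C *ᵥ (y + h) + c ⬝ᵥ (y + h) - (y ⬝ᵥ C *ᵥ y + c ⬝ᵥ y) =
      (C + Cᵀ) *ᵥ h ⬝ᵥ y + (h ⬝ᵥ C *ᵥ h + c ⬝ᵥ h) := by
  have : h ⬝ᵥ C *ᵥ y = Cᵀ *ᵥ h ⬝ᵥ y := by rw [dotProduct_mulVec, ← mulVec_transpose]
  simp only [mulVec_add, add_mulVec, dotProduct_add, add_dotProduct, this,
    dotProduct_comm y (C *ᵥ h)]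
  ring

theorem AddChar.IsPrimitive.mul_conj_sum_apply_quadratic {ψ : AddChar R ℂ} (hψ : ψ.IsPrimitive)
    (C : Matrix ι ι R) (c : ι → R) :
    (∑ x, ψ (x ⬝ᵥ C *ᵥ x + c ⬝ᵥ x)) * starRingEnd ℂ (∑ x, ψ (x ⬝ᵥ C *ᵥ x + c ⬝ᵥ x)) =
      (Fintype.card R ^ Fintype.card ι : ℂ) *
        ∑ h with (C + Cᵀ) *ᵥ h = 0, ψ (h ⬝ᵥ C *ᵥ h + c ⬝ᵥ h) := by
  set Q : (ι → R) → R := fun x ↦ x ⬝ᵥ C *ᵥ x + c ⬝ᵥ x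
  calc (∑ x, ψ (Q x)) * starRingEnd ℂ (∑ y, ψ (Q y))
      = ∑ y, ∑ h, ψ (Q (y + h) - Q y) := by
        rw [map_sum, sum_mul_sum, sum_comm]
        refine sum_congr rfl fun y _ ↦ ?_
        rw [← Fintype.sum_equiv (Equiv.addLeft y) (fun h ↦ _) _ fun _ ↦ rfl]
        simp [← AddChar.map_neg_eq_conj, ← AddChar.map_add_eq_mul, sub_eq_add_neg]
    _ = ∑ h, ψ (Q h) * ∑ y, ψ ((C + Cᵀ) *ᵥ h ⬝ᵥ y) := by
        rw [sum_comm]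
        simp only [Q, quadratic_add_sub, AddChar.map_add_eq_mul, mul_sum, mul_comm]
    _ = _ := by
        simp [Q, hψ.sum_apply_dotProduct, sum_filter, mul_sum, mul_comm]

end Ring

section Field

variable {K ι : Type*} [Field K] [Fintype K] [DecidableEq K] [Fintype ι] [DecidableEq ι]

theorem Matrix.card_filter_mulVec_eq_zero {κ : Type*} [Fintype κ] (A : Matrix κ ι K) :
    #{h | A *ᵥ h = 0} = Fintype.card K ^ (Fintype.card ι - A.rank) := by
  have hker : #{h | A *ᵥ h = 0} = Nat.card (LinearMap.ker A.mulVecLin) := by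
    rw [← Fintype.card_subtype, ← Nat.card_eq_fintype_card]
    exact Nat.card_congr (Equiv.subtypeEquivRight fun h ↦ by simp)
  have hrank := LinearMap.finrank_range_add_finrank_ker A.mulVecLin
  rw [Module.finrank_fintype_fun_eq_card] at hrank
  rw [hker, Module.natCard_eq_pow_finrank (K := K), Nat.card_eq_fintype_card, rank]
  congr 1
  omega

theorem AddChar.IsPrimitive.norm_sum_apply_quadratic_sq_le {ψ : AddChar K ℂ}
    (hψ : ψ.IsPrimitive) (C : Matrix ι ι K) (c : ι → K) :
    ‖∑ x, ψ (x ⬝ᵥ C *ᵥ x + c ⬝ᵥ x)‖ ^ 2 ≤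
      (Fintype.card K : ℝ) ^ (2 * Fintype.card ι - (C + Cᵀ).rank) := by
  set q := Fintype.card K
  set n := Fintype.card ι
  have hr : (C + Cᵀ).rank ≤ n := rank_le_card_width _
  calc ‖∑ x, ψ (x ⬝ᵥ C *ᵥ x + c ⬝ᵥ x)‖ ^ 2
      = ‖(∑ x, ψ (x ⬝ᵥ C *ᵥ x + c ⬝ᵥ x)) * starRingEnd ℂ (∑ x, ψ (x ⬝ᵥ C *ᵥ x + c ⬝ᵥ x))‖ := by
        rw [norm_mul, Complex.norm_conj, sq]
    _ = (q : ℝ) ^ n * ‖∑ h with (C + Cᵀ) *ᵥ h = 0, ψ (h ⬝ᵥ C *ᵥ h + c ⬝ᵥ h)‖ := by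
        rw [hψ.mul_conj_sum_apply_quadratic, norm_mul, norm_pow, Complex.norm_natCast]
    _ ≤ (q : ℝ) ^ n * #{h | (C + Cᵀ) *ᵥ h = 0} := by
        gcongr
        exact (norm_sum_le _ _).trans_eq (by simp [ψ.norm_apply])
    _ = (q : ℝ) ^ (2 * n - (C + Cᵀ).rank) := by
        rw [card_filter_mulVec_eq_zero, Nat.cast_pow, ← pow_add]
        congr 1
        omega

end Field

theorem stmt2_general (p m : ℕ) [Fact p.Prime]
    (C : Matrix (Fin m) (Fin m) (ZMod p)) (c : Fin m → ZMod p) :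
    ‖∑ x : Fin m → ZMod p,
        omegaP p ^ ((x ⬝ᵥ C.mulVec x) + c ⬝ᵥ x).val‖ ^ 2
      ≤ (p : ℝ) ^ (2 * m - (C + Cᵀ).rank) := by
  have hω : IsPrimitiveRoot (omegaP p) p := Complex.isPrimitiveRoot_exp p NeZero.out
  have hψ := AddChar.zmodChar_primitive_of_primitive_root p hω
  simpa [AddChar.zmodChar_apply] using hψ.norm_sum_apply_quadratic_sq_le C c

theorem stmt2 (p m : ℕ) [Fact p.Prime] (hodd : Odd p) (hm : 0 < m)
    (C : Matrix (Fin m) (Fin m) (ZMod p)) (c : Fin m → ZMod p) :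
    ‖∑ x : Fin m → ZMod p,
        omegaP p ^ ((x ⬝ᵥ C.mulVec x) + c ⬝ᵥ x).val‖ ^ 2
      ≤ (p : ℝ) ^ (2 * m - (C + Cᵀ).rank) :=
  stmt2_general p m C c
end

section
/- Let p be an odd prime, m ≥ 2, π a permutation of {1,…,m}, a = (a_1,…,a_{m-1}) with each a_i ∈ F_p nonzero, and d = (d_1,…,d_m) ∈ F_p^m. Let A be the m×m matrix over F_p with A_{ii} = d_i, A_{π(k),π(k+1)} = a_k for 1 ≤ k ≤ m-1, and all other entries 0. Then rank(A + Aᵀ) ≥ m - 1 over F_p. -/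
open scoped BigOperators Matrix

/-! Relabelling the coordinates along `π` does not change the rank, and in the relabelled
coordinates `A + Aᵀ` is tridiagonal with off-diagonal entries `a k`. Deleting its last row and
first column leaves a lower triangular `(m - 1) × (m - 1)` minor with diagonal
`a 0, …, a (m - 2)`, whose determinant is therefore nonzero. -/

/-- The matrix ψ(π, a, d): diagonal entries `d i`, entry `a k` at position
`(π k, π (k+1))` for `k + 1 < m`, zeros elsewhere. -/
def psi (p m : ℕ) (π : Equiv.Perm (Fin m)) (a d : Fin m → ZMod p) :
    Matrix (Fin m) (Fin m) (ZMod p) :=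
  Matrix.of fun i j =>
    if i = j then d i
    else ∑ k : Fin m, ∑ l : Fin m,
      if ((l : ℕ) = (k : ℕ) + 1 ∧ π k = i ∧ π l = j) then a k else 0

theorem Matrix.card_le_rank_of_isLowerTriangular_submatrix {R m n ι : Type*} [CommRing R]
    [IsDomain R] [Fintype n] [Fintype ι] [LinearOrder ι] (M : Matrix m n R) (r : ι → m)
    (c : ι → n) (h_tri : ∀ i j, i < j → M (r i) (c j) = 0)
    (h_diag : ∀ i, M (r i) (c i) ≠ 0) :
    Fintype.card ι ≤ M.rank := by
  classical
  have hdet : (M.submatrix r c).det ≠ 0 := by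
    rw [Matrix.det_of_isLowerTriangular (M.submatrix r c) fun i j hij => h_tri i j hij]
    exact Finset.prod_ne_zero_iff.mpr fun i _ => h_diag i
  rw [← Matrix.rank_of_det_ne_zero hdet]
  exact Matrix.rank_submatrix_le M r c

section psi

variable {p m : ℕ} (π : Equiv.Perm (Fin m)) (a d : Fin m → ZMod p)

theorem psi_apply_perm {s t : Fin m} (hst : s ≠ t) :
    psi p m π a d (π s) (π t) = if (t : ℕ) = s + 1 then a s else 0 := by
  rw [psi, Matrix.of_apply, if_neg (π.injective.ne hst),
    Finset.sum_eq_single s, Finset.sum_eq_single t]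
  · simp
  all_goals simp +contextual [π.injective.eq_iff]

theorem psi_add_transpose_apply_perm {s t : Fin m} (hst : s ≠ t) :
    (psi p m π a d + (psi p m π a d)ᵀ) (π s) (π t) =
      (if (t : ℕ) = s + 1 then a s else 0) + (if (s : ℕ) = t + 1 then a t else 0) := by
  rw [Matrix.add_apply, Matrix.transpose_apply, psi_apply_perm π a d hst,
    psi_apply_perm π a d hst.symm]

end psi

theorem psi_add_transpose_apply_castSucc_succ {p n : ℕ} (π : Equiv.Perm (Fin (n + 1)))
    (a d : Fin (n + 1) → ZMod p) {i j : Fin n} (hij : i ≤ j) :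
    (psi p (n + 1) π a d + (psi p (n + 1) π a d)ᵀ) (π i.castSucc) (π j.succ) =
      if i = j then a i.castSucc else 0 := by
  have hij : (i : ℕ) ≤ j := hij
  rw [psi_add_transpose_apply_perm π a d (by simp [Fin.ext_iff]; omega)]
  simp [Fin.ext_iff, eq_comm (a := (j : ℕ)), show (i : ℕ) ≠ j + 1 + 1 by omega]

theorem stmt6_general (p m : ℕ) [Fact p.Prime]
    (π : Equiv.Perm (Fin m)) (a d : Fin m → ZMod p)
    (ha : ∀ k : Fin m, (k : ℕ) < m - 1 → a k ≠ 0) :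
    m - 1 ≤ (psi p m π a d + (psi p m π a d)ᵀ).rank := by
  obtain _ | n := m
  · exact Nat.zero_le _
  rw [← Matrix.rank_submatrix _ π π, Nat.add_sub_cancel]
  refine (Fintype.card_fin n).ge.trans <|
    Matrix.card_le_rank_of_isLowerTriangular_submatrix _ Fin.castSucc Fin.succ
      (fun i j hij => ?_) fun i => ?_
  · simp [psi_add_transpose_apply_castSucc_succ π a d hij.le, hij.ne]
  · simpa [psi_add_transpose_apply_castSucc_succ π a d le_rfl] using ha i.castSucc (by simp)

theorem stmt6 (p m : ℕ) [Fact p.Prime] (hodd : Odd p) (hm : 2 ≤ m)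
    (π : Equiv.Perm (Fin m)) (a d : Fin m → ZMod p)
    (ha : ∀ k : Fin m, (k : ℕ) < m - 1 → a k ≠ 0) :
    m - 1 ≤ (psi p m π a d + (psi p m π a d)ᵀ).rank :=
  stmt6_general p m π a d ha
end

section
/- Let p be an odd prime, m ≥ 2. Let π be a permutation of {1,…,m}, a ∈ (F_p^*)^{m-1}, and let d_1,…,d_p ∈ F_p^m satisfy: for every coordinate k and every i ≠ j, d_{i,k} ≠ d_{j,k}. For each i let A_i = ψ(π,a,d_i), and let Φ be the p^m × p·p^m complex matrix whose columns are the normalized sequences x ↦ p^{-m/2} ω^{x A_i xᵀ + c·x} for all i ∈ {1,…,p}, c ∈ F_p^m. Then the coherence μ(Φ) = max over distinct columns of |⟨s,t⟩| equals p^{-m/2}. -/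
open scoped BigOperators Matrix

/-- The normalized spreading column corresponding to the quadratic matrix `A`
and the linear shift `c`: `x ↦ p^{-m/2} ω^{x A xᵀ + c·x}`. -/
noncomputable def col (p m : ℕ) (A : Matrix (Fin m) (Fin m) (ZMod p))
    (c : Fin m → ZMod p) : (Fin m → ZMod p) → ℂ :=
  fun x => omegaP p ^ ((x ⬝ᵥ A.mulVec x) + c ⬝ᵥ x).val /
    (Real.sqrt ((p : ℝ) ^ m) : ℂ)

/-! Columns built from the same matrix `A_i` with distinct shifts are orthogonal by orthogonality
of additive characters. For `i ≠ j`, `A_i - A_j` is the diagonal matrix `d_i - d_j`, whose entries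
are all nonzero, so the inner product factors over the `m` coordinates into quadratic Gauss sums
`S = ∑ₜ ω^(q t)`, `q t = b t² + v t`, `b ≠ 0`. Substituting `x = y + u` in
`|S|² = ∑ₓ ∑ᵧ ω^(q x - q y)` leaves an inner character sum in `y` with frequency `2bu`, which
vanishes unless `u = 0` because `p` is odd; so `|S| = √p` and every such inner product has
modulus `p^(m/2) / p^m = p^(-m/2)`. -/

open Finset

theorem AddChar.norm_sum_quadratic {F : Type*} [Field F] [Fintype F] {ψ : AddChar F ℂ}
    (hψ : ψ.IsPrimitive) (h2 : (2 : F) ≠ 0) {b : F} (hb : b ≠ 0) (v : F) :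
    ‖∑ t, ψ (b * t ^ 2 + v * t)‖ = √(Fintype.card F) := by
  classical
  set q : F → F := fun t => b * t ^ 2 + v * t
  have hshift : ∀ u y, q (y + u) - q y = q u + y * (2 * b * u) := fun u y => by ring
  have hnormSq : (Complex.normSq (∑ t, ψ (q t)) : ℂ) = Fintype.card F :=
    calc (Complex.normSq (∑ t, ψ (q t)) : ℂ)
        = ∑ y, ∑ u, ψ (q (y + u) - q y) := by
          rw [← Complex.mul_conj, map_sum, sum_mul_sum, sum_comm]
          refine sum_congr rfl fun y _ => ?_
          rw [← Equiv.sum_comp (Equiv.addLeft y)]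
          simp [sub_eq_add_neg, AddChar.map_add_eq_mul, AddChar.map_neg_eq_conj]
      _ = ∑ u, ψ (q u) * ∑ y, ψ (y * (2 * b * u)) := by
          rw [sum_comm]
          simp_rw [hshift, AddChar.map_add_eq_mul, mul_sum]
      _ = Fintype.card F := by
          simp_rw [AddChar.sum_mulShift _ hψ, mul_eq_zero, h2, hb, false_or]
          simp [q]
  have hsq : ‖∑ t, ψ (q t)‖ ^ 2 = Fintype.card F := by
    exact_mod_cast Complex.normSq_eq_norm_sq _ ▸ hnormSq
  change ‖∑ t, ψ (q t)‖ = _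
  rw [← hsq, Real.sqrt_sq (norm_nonneg _)]

lemma AddChar.map_sum_eq_prod {A M ι : Type*} [AddCommMonoid A] [CommMonoid M]
    (ψ : AddChar A M) (s : Finset ι) (f : ι → A) : ψ (∑ i ∈ s, f i) = ∏ i ∈ s, ψ (f i) := by
  classical
  induction s using Finset.induction_on with
  | empty => simp
  | insert i s hi ih => rw [sum_insert hi, prod_insert hi, AddChar.map_add_eq_mul, ih]

lemma psi_sub_psi {p m : ℕ} (π : Equiv.Perm (Fin m)) (a d d' : Fin m → ZMod p) :
    psi p m π a d - psi p m π a d' = Matrix.diagonal (d - d') := by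
  ext i j
  by_cases h : i = j <;> simp [psi, Matrix.diagonal, h]

section Spreading

variable (p : ℕ) [Fact p.Prime]

lemma omegaP_isPrimitiveRoot : IsPrimitiveRoot (omegaP p) p :=
  Complex.isPrimitiveRoot_exp p (Fact.out : p.Prime).ne_zero

noncomputable def omegaChar : AddChar (ZMod p) ℂ :=
  AddChar.zmodChar p (omegaP_isPrimitiveRoot p).pow_eq_one

lemma omegaChar_isPrimitive : (omegaChar p).IsPrimitive :=
  AddChar.zmodChar_primitive_of_primitive_root p (omegaP_isPrimitiveRoot p)

variable {p} {m : ℕ}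

lemma col_eq_omegaChar (A : Matrix (Fin m) (Fin m) (ZMod p)) (c x : Fin m → ZMod p) :
    col p m A c x = omegaChar p (x ⬝ᵥ A *ᵥ x + c ⬝ᵥ x) / (√((p : ℝ) ^ m) : ℂ) :=
  rfl

lemma col_mul_conj_col (A A' : Matrix (Fin m) (Fin m) (ZMod p)) (c c' x : Fin m → ZMod p) :
    col p m A c x * starRingEnd ℂ (col p m A' c' x) =
      omegaChar p (x ⬝ᵥ (A - A') *ᵥ x + (c - c') ⬝ᵥ x) / (p : ℂ) ^ m := by
  have hsqrt : (√((p : ℝ) ^ m) : ℂ) * (√((p : ℝ) ^ m) : ℂ) = (p : ℂ) ^ m := by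
    rw [← Complex.ofReal_mul, Real.mul_self_sqrt (by positivity)]
    push_cast
    rfl
  rw [col_eq_omegaChar, col_eq_omegaChar, map_div₀, ← AddChar.map_neg_eq_conj,
    Complex.conj_ofReal, div_mul_div_comm, hsqrt, ← AddChar.map_add_eq_mul,
    Matrix.sub_mulVec, dotProduct_sub, sub_dotProduct]
  congr 2
  ring

lemma sum_col_mul_conj_col_of_sub_eq_diagonal {A A' : Matrix (Fin m) (Fin m) (ZMod p)}
    {b : Fin m → ZMod p} (hA : A - A' = Matrix.diagonal b) (c c' : Fin m → ZMod p) :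
    ∑ x, col p m A c x * starRingEnd ℂ (col p m A' c' x) =
      (∏ k, ∑ t, omegaChar p (b k * t ^ 2 + (c k - c' k) * t)) / (p : ℂ) ^ m := by
  classical
  have hform : ∀ x : Fin m → ZMod p, x ⬝ᵥ (A - A') *ᵥ x + (c - c') ⬝ᵥ x =
      ∑ k, (b k * x k ^ 2 + (c k - c' k) * x k) := fun x => by
    simp only [hA, Matrix.mulVec_diagonal, dotProduct, ← sum_add_distrib, Pi.sub_apply]
    exact sum_congr rfl fun k _ => by ring
  simp_rw [col_mul_conj_col, hform, AddChar.map_sum_eq_prod, ← sum_div, Fintype.prod_sum]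

lemma norm_sum_col_mul_conj_col_of_ne (hodd : Odd p) {A A' : Matrix (Fin m) (Fin m) (ZMod p)}
    {b : Fin m → ZMod p} (hA : A - A' = Matrix.diagonal b) (hb : ∀ k, b k ≠ 0)
    (c c' : Fin m → ZMod p) :
    ‖∑ x, col p m A c x * starRingEnd ℂ (col p m A' c' x)‖ = (√((p : ℝ) ^ m))⁻¹ := by
  have h2 : (2 : ZMod p) ≠ 0 := Ring.two_ne_zero <| by
    rw [ZMod.ringChar_zmod_n]
    rintro rfl
    exact (by decide : ¬Odd 2) hodd
  rw [sum_col_mul_conj_col_of_sub_eq_diagonal hA, norm_div, norm_prod, norm_pow,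
    Complex.norm_natCast]
  simp_rw [AddChar.norm_sum_quadratic (omegaChar_isPrimitive p) h2 (hb _), ZMod.card]
  rw [← Real.sqrt_prod _ fun _ _ => Nat.cast_nonneg p, prod_const, card_univ, Fintype.card_fin,
    Real.sqrt_div_self]

lemma sum_col_mul_conj_col_self_eq_zero (A : Matrix (Fin m) (Fin m) (ZMod p))
    {c c' : Fin m → ZMod p} (hc : c ≠ c') :
    ∑ x, col p m A c x * starRingEnd ℂ (col p m A c' x) = 0 := by
  obtain ⟨k, hk⟩ := Function.ne_iff.mp hc
  rw [sum_col_mul_conj_col_of_sub_eq_diagonal (b := 0) (by simp), prod_eq_zero (mem_univ k),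
    zero_div]
  simp_rw [Pi.zero_apply, zero_mul, zero_add, mul_comm _ (_ : ZMod p),
    AddChar.sum_mulShift _ (omegaChar_isPrimitive p), sub_eq_zero, if_neg hk, Nat.cast_zero]

end Spreading

theorem stmt9_general (p m : ℕ) [Fact p.Prime] (hodd : Odd p)
    (π : Equiv.Perm (Fin m)) (a : Fin m → ZMod p)
    (d : Fin p → Fin m → ZMod p)
    (hd : ∀ (k : Fin m) (i j : Fin p), i ≠ j → d i k ≠ d j k) :
    IsGreatest
      {r : ℝ | ∃ (i j : Fin p) (c c' : Fin m → ZMod p), (i, c) ≠ (j, c') ∧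
        r = ‖(∑ x : Fin m → ZMod p,
          col p m (psi p m π a (d i)) c x *
            (starRingEnd ℂ) (col p m (psi p m π a (d j)) c' x))‖}
      ((Real.sqrt ((p : ℝ) ^ m))⁻¹) := by
  have hp : p.Prime := Fact.out
  have hcross : ∀ (i j : Fin p) (c c' : Fin m → ZMod p), i ≠ j →
      ‖∑ x, col p m (psi p m π a (d i)) c x *
        starRingEnd ℂ (col p m (psi p m π a (d j)) c' x)‖ = (√((p : ℝ) ^ m))⁻¹ :=
    fun i j c c' hij => norm_sum_col_mul_conj_col_of_ne hodd (psi_sub_psi π a (d i) (d j))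
      (fun k => sub_ne_zero.mpr (hd k i j hij)) c c'
  have h01 : (⟨0, hp.pos⟩ : Fin p) ≠ ⟨1, hp.one_lt⟩ := by simp
  refine ⟨⟨_, _, 0, 0, fun h => h01 (congrArg Prod.fst h), (hcross _ _ 0 0 h01).symm⟩, ?_⟩
  rintro r ⟨i, j, c, c', hne, rfl⟩
  obtain rfl | hij := eq_or_ne i j
  · have hc : c ≠ c' := fun h => hne (h ▸ rfl)
    rw [sum_col_mul_conj_col_self_eq_zero _ hc, norm_zero]
    positivity
  · exact (hcross i j c c' hij).le

theorem stmt9 (p m : ℕ) [Fact p.Prime] (hodd : Odd p) (hm : 2 ≤ m)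
    (π : Equiv.Perm (Fin m)) (a : Fin m → ZMod p)
    (ha : ∀ k : Fin m, (k : ℕ) < m - 1 → a k ≠ 0)
    (d : Fin p → Fin m → ZMod p)
    (hd : ∀ (k : Fin m) (i j : Fin p), i ≠ j → d i k ≠ d j k) :
    IsGreatest
      {r : ℝ | ∃ (i j : Fin p) (c c' : Fin m → ZMod p), (i, c) ≠ (j, c') ∧
        r = ‖(∑ x : Fin m → ZMod p,
          col p m (psi p m π a (d i)) c x *
            (starRingEnd ℂ) (col p m (psi p m π a (d j)) c' x))‖}
      ((Real.sqrt ((p : ℝ) ^ m))⁻¹) :=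
  stmt9_general p m hodd π a d hd
end

section
/- Let p be an odd prime, m ≥ 2, π a permutation of {1,…,m}, a ∈ (F_p^*)^{m-1}, d ∈ F_p^m, and A = ψ(π,a,d). Define d'_i = d_{π(i)} and B = ψ(id, a, d'). Then for all x ∈ F_p^m, x(A + Aᵀ)xᵀ = (xP)(B + Bᵀ)(xP)ᵀ where P is the permutation matrix of π, and consequently rank(A + Aᵀ) = rank(B + Bᵀ) over F_p. -/
open scoped BigOperators Matrix

theorem Matrix.dotProduct_submatrix_mulVec_equiv {m n α : Type*} [Fintype m] [Fintype n]
    [NonUnitalNonAssocSemiring α] (M : Matrix m m α) (e : n ≃ m) (x : n → α) :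
    x ⬝ᵥ M.submatrix e e *ᵥ x = (x ∘ e.symm) ⬝ᵥ M *ᵥ (x ∘ e.symm) := by
  rw [Matrix.submatrix_mulVec_equiv, comp_equiv_symm_dotProduct]

lemma psi_eq_submatrix (p m : ℕ) (π : Equiv.Perm (Fin m)) (a d : Fin m → ZMod p) :
    psi p m π a d =
      (psi p m (Equiv.refl (Fin m)) a (fun i => d (π i))).submatrix π.symm π.symm := by
  ext i j
  simp only [psi, Matrix.submatrix_apply, Matrix.of_apply, Equiv.refl_apply, Equiv.apply_symm_apply,
    π.symm.injective.eq_iff]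
  refine if_congr Iff.rfl rfl (Finset.sum_congr rfl fun k _ => Finset.sum_congr rfl fun l _ => ?_)
  simp only [Equiv.eq_symm_apply]

lemma psi_add_transpose_eq_submatrix (p m : ℕ) (π : Equiv.Perm (Fin m)) (a d : Fin m → ZMod p) :
    psi p m π a d + (psi p m π a d)ᵀ =
      (psi p m (Equiv.refl (Fin m)) a (fun i => d (π i)) +
        (psi p m (Equiv.refl (Fin m)) a (fun i => d (π i)))ᵀ).submatrix π.symm π.symm := by
  rw [psi_eq_submatrix, Matrix.transpose_submatrix]
  rfl

theorem stmt14_general (p m : ℕ)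
    (π : Equiv.Perm (Fin m)) (a d : Fin m → ZMod p) :
    (∀ x : Fin m → ZMod p,
      x ⬝ᵥ (psi p m π a d + (psi p m π a d)ᵀ).mulVec x =
        (fun i => x (π i)) ⬝ᵥ
          (psi p m (Equiv.refl (Fin m)) a (fun i => d (π i)) +
            (psi p m (Equiv.refl (Fin m)) a (fun i => d (π i)))ᵀ).mulVec
          (fun i => x (π i))) ∧
    (psi p m π a d + (psi p m π a d)ᵀ).rank =
      (psi p m (Equiv.refl (Fin m)) a (fun i => d (π i)) +
        (psi p m (Equiv.refl (Fin m)) a (fun i => d (π i)))ᵀ).rank := by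
  rw [psi_add_transpose_eq_submatrix]
  exact ⟨fun x => Matrix.dotProduct_submatrix_mulVec_equiv _ π.symm x, Matrix.rank_submatrix _ _ _⟩

theorem stmt14 (p m : ℕ) [Fact p.Prime] (hodd : Odd p) (hm : 2 ≤ m)
    (π : Equiv.Perm (Fin m)) (a d : Fin m → ZMod p)
    (ha : ∀ k : Fin m, (k : ℕ) < m - 1 → a k ≠ 0) :
    (∀ x : Fin m → ZMod p,
      x ⬝ᵥ (psi p m π a d + (psi p m π a d)ᵀ).mulVec x =
        (fun i => x (π i)) ⬝ᵥ
          (psi p m (Equiv.refl (Fin m)) a (fun i => d (π i)) +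
            (psi p m (Equiv.refl (Fin m)) a (fun i => d (π i)))ᵀ).mulVec
          (fun i => x (π i))) ∧
    (psi p m π a d + (psi p m π a d)ᵀ).rank =
      (psi p m (Equiv.refl (Fin m)) a (fun i => d (π i)) +
        (psi p m (Equiv.refl (Fin m)) a (fun i => d (π i)))ᵀ).rank :=
  stmt14_general p m π a d
end

section
/- Let p be an odd prime, m ≥ 2, π a permutation of {1,…,m}, and a, b ∈ (F_p^*)^{m-1} with a_i ≠ b_i for all i. For any d, d' ∈ F_p^m, the difference ψ(π,a,d) - ψ(π,b,d') equals ψ(π, a-b, d-d'); in particular all off-diagonal structural entries (a-b)_i are nonzero, and hence rank((ψ(π,a,d)-ψ(π,b,d')) + (ψ(π,a,d)-ψ(π,b,d'))ᵀ) ≥ m-1 over F_p. -/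
open scoped BigOperators Matrix

lemma psi_sub (p m : ℕ) (π : Equiv.Perm (Fin m)) (a b d d' : Fin m → ZMod p) :
    psi p m π a d - psi p m π b d' = psi p m π (a - b) (d - d') := by
  ext i j
  simp only [psi, Matrix.sub_apply, Matrix.of_apply]
  split_ifs with h
  · simp
  · rw [← Finset.sum_sub_distrib]
    refine Finset.sum_congr rfl fun k _ => ?_
    rw [← Finset.sum_sub_distrib]
    refine Finset.sum_congr rfl fun l _ => ?_
    split_ifs <;> simp

lemma psi_off (p m : ℕ) (π : Equiv.Perm (Fin m)) (c e : Fin m → ZMod p)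
    (u v : Fin m) (huv : u ≠ v) :
    psi p m π c e (π u) (π v) = if (v : ℕ) = (u : ℕ) + 1 then c u else 0 := by
  have h1 : π u ≠ π v := fun h => huv (π.injective h)
  simp only [psi, Matrix.of_apply, if_neg h1]
  rw [Finset.sum_eq_single u]
  · rw [Finset.sum_eq_single v]
    · simp
    · intro l _ hl
      rw [if_neg]
      rintro ⟨-, -, h⟩
      exact hl (π.injective h)
    · simp
  · intro k _ hk
    apply Finset.sum_eq_zero
    intro l _
    rw [if_neg]
    rintro ⟨-, h, -⟩
    exact hk (π.injective h)
  · simp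

theorem stmt15 (p m : ℕ) [Fact p.Prime] (hodd : Odd p) (hm : 2 ≤ m)
    (π : Equiv.Perm (Fin m)) (a b d d' : Fin m → ZMod p)
    (ha : ∀ k : Fin m, (k : ℕ) < m - 1 → a k ≠ 0)
    (hb : ∀ k : Fin m, (k : ℕ) < m - 1 → b k ≠ 0)
    (hab : ∀ k : Fin m, (k : ℕ) < m - 1 → a k ≠ b k) :
    psi p m π a d - psi p m π b d' = psi p m π (a - b) (d - d') ∧
    (∀ k : Fin m, (k : ℕ) < m - 1 → (a - b) k ≠ 0) ∧
    m - 1 ≤ ((psi p m π a d - psi p m π b d') +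
      (psi p m π a d - psi p m π b d')ᵀ).rank := by
  have hsub := psi_sub p m π a b d d'
  have hc : ∀ k : Fin m, (k : ℕ) < m - 1 → (a - b) k ≠ 0 := by
    intro k hk
    simpa [sub_eq_zero] using hab k hk
  refine ⟨hsub, hc, ?_⟩
  rw [hsub]
  obtain ⟨n, rfl⟩ : ∃ n, m = n + 1 := ⟨m - 1, by omega⟩
  simp only [Nat.add_sub_cancel] at hc ⊢
  set c : Fin (n + 1) → ZMod p := a - b with hcdef
  set e : Fin (n + 1) → ZMod p := d - d' with hedef
  set M : Matrix (Fin (n + 1)) (Fin (n + 1)) (ZMod p) := psi p (n + 1) π c e with hM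
  set S : Matrix (Fin (n + 1)) (Fin (n + 1)) (ZMod p) := M + Mᵀ with hS
  -- entries of S at (π u, π v) for u ≠ v
  have hSentry : ∀ u v : Fin (n + 1), u ≠ v →
      S (π u) (π v) = (if (v : ℕ) = (u : ℕ) + 1 then c u else 0) +
        (if (u : ℕ) = (v : ℕ) + 1 then c v else 0) := by
    intro u v huv
    simp only [hS, Matrix.add_apply, Matrix.transpose_apply, hM]
    rw [psi_off p (n+1) π c e u v huv, psi_off p (n+1) π c e v u (Ne.symm huv)]
  -- the auxiliary matrices
  set P : Matrix (Fin n) (Fin (n + 1)) (ZMod p) :=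
    Matrix.of fun i k => if k = π i.castSucc then 1 else 0 with hP
  set Q : Matrix (Fin (n + 1)) (Fin n) (ZMod p) :=
    Matrix.of fun k j => if k = π j.succ then 1 else 0 with hQ
  set B : Matrix (Fin n) (Fin n) (ZMod p) := P * S * Q with hB
  have hBentry : ∀ i j : Fin n, B i j = S (π i.castSucc) (π j.succ) := by
    intro i j
    simp only [hB, hP, hQ, Matrix.mul_apply, Matrix.of_apply, ite_mul, mul_ite, one_mul,
      zero_mul, mul_one, mul_zero, Finset.sum_ite_eq', Finset.mem_univ, if_true]
  have hBdiag : ∀ i : Fin n, B i i = c i.castSucc := by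
    intro i
    rw [hBentry i i, hSentry i.castSucc i.succ (by
      intro h
      have := congrArg (Fin.val) h
      simp [Fin.val_succ] at this)]
    have h1 : (i.succ : ℕ) = (i.castSucc : ℕ) + 1 := by
      simp [Fin.val_succ]
    have h2 : ¬((i.castSucc : ℕ) = (i.succ : ℕ) + 1) := by
      simp only [Fin.val_succ, Fin.coe_castSucc]; omega
    rw [if_pos h1, if_neg h2, add_zero]
  have hBlow : ∀ i j : Fin n, i < j → B i j = 0 := by
    intro i j hij
    have hij' : (i : ℕ) < (j : ℕ) := hij
    rw [hBentry i j, hSentry i.castSucc j.succ (by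
      intro h
      have := congrArg (Fin.val) h
      simp [Fin.val_succ] at this
      omega)]
    rw [if_neg (by simp only [Fin.val_succ, Fin.coe_castSucc]; omega),
      if_neg (by simp only [Fin.val_succ, Fin.coe_castSucc]; omega)]
    simp
  -- B is lower triangular with nonzero diagonal, hence invertible
  have hdet : B.det = ∏ i : Fin n, c i.castSucc := by
    rw [Matrix.det_of_lowerTriangular B (by
      intro i j h
      exact hBlow i j h)]
    exact Finset.prod_congr rfl fun i _ => hBdiag i
  have hdetne : B.det ≠ 0 := by
    rw [hdet]
    apply Finset.prod_ne_zero_iff.mpr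
    intro i _
    exact hc i.castSucc (by simp [Fin.is_lt])
  have hunit : IsUnit B := (Matrix.isUnit_iff_isUnit_det B).mpr (isUnit_iff_ne_zero.mpr hdetne)
  have hrankB : B.rank = n := by
    rw [Matrix.rank_of_isUnit B hunit, Fintype.card_fin]
  calc n = B.rank := hrankB.symm
    _ ≤ (S * Q).rank := by rw [hB, Matrix.mul_assoc]; exact Matrix.rank_mul_le_right P (S * Q)
    _ ≤ S.rank := Matrix.rank_mul_le_left S Q
end

section
/- Let p be an odd prime, m ≥ 1, and let {A_1,…,A_L} be m×m matrices over F_p such that for all i ≠ j, rank((A_i - A_j) + (A_i - A_j)ᵀ) ≥ r over F_p. Let Φ be the collection of L·p^m unit vectors in C^{p^m} given by x ↦ p^{-m/2} ω^{x A_i xᵀ + c·x} for i ∈ {1,…,L} and c ∈ F_p^m. Then the coherence of Φ is at most p^{-r/2}. -/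
/-! Write `S = ∑ₓ ψ(Q x)` with `Q x = x ⬝ᵥ B x + d ⬝ᵥ x`, `B = Aᵢ - Aⱼ`,
`d = c - c'`, so that the inner product of the two columns is `S / p^m`. Weyl differencing
(substituting `x = y + h` in `S · S̄`) makes the phase linear in `y`, and summing over `y` leaves
`|S|² = p^m · ∑_{h ∈ ker(B + Bᵀ)} ψ(Q h) ≤ p^m · p^(m - rank(B + Bᵀ))`.
For `i = j` the sum `S` is a nontrivial linear character sum, hence `0`. -/

open scoped BigOperators Matrix

namespace AddChar

lemma map_sum_eq_prod_s16 {A M ι : Type*} [AddCommMonoid A] [CommMonoid M] (ψ : AddChar A M)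
    (s : Finset ι) (f : ι → A) : ψ (∑ i ∈ s, f i) = ∏ i ∈ s, ψ (f i) := by
  induction s using Finset.cons_induction with
  | empty => simp
  | cons k s hk ih => rw [Finset.sum_cons, map_add_eq_mul, ih, Finset.prod_cons]

lemma sum_dotProduct {R R' ι : Type*} [CommRing R] [Fintype R] [DecidableEq R] [CommRing R']
    [IsDomain R'] [Fintype ι] [DecidableEq ι] {ψ : AddChar R R'} (hψ : ψ.IsPrimitive)
    (a : ι → R) :
    ∑ x : ι → R, ψ (a ⬝ᵥ x)
      = if a = 0 then (Fintype.card R : R') ^ Fintype.card ι else 0 := by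
  simp_rw [dotProduct, map_sum_eq_prod_s16]
  rw [← Fintype.prod_sum (fun k t => ψ (a k * t))]
  simp_rw [mul_comm (a _), sum_mulShift _ hψ]
  simp only [apply_ite Nat.cast, Nat.cast_zero, Finset.prod_ite_zero, Finset.prod_const,
    Finset.card_univ, Finset.mem_univ, true_implies, funext_iff, Pi.zero_apply]

end AddChar

namespace Matrix

variable {R ι : Type*} [CommRing R] [Fintype ι]

def quadPoly (B : Matrix ι ι R) (d x : ι → R) : R := x ⬝ᵥ B *ᵥ x + d ⬝ᵥ x

lemma quadPoly_add_sub (B : Matrix ι ι R) (d y h : ι → R) :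
    quadPoly B d (y + h) - quadPoly B d y = (B + Bᵀ) *ᵥ h ⬝ᵥ y + quadPoly B d h := by
  have hBt : h ⬝ᵥ B *ᵥ y = (Bᵀ *ᵥ h) ⬝ᵥ y := by
    rw [dotProduct_mulVec, mulVec_transpose]
  simp only [quadPoly, mulVec_add, add_mulVec, dotProduct_add, add_dotProduct, hBt,
    dotProduct_comm y]
  ring

lemma quadPoly_sub_quadPoly (A A' : Matrix ι ι R) (c c' x : ι → R) :
    quadPoly A c x - quadPoly A' c' x = quadPoly (A - A') (c - c') x := by
  simp only [quadPoly, sub_mulVec, dotProduct_sub, sub_dotProduct]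
  ring

lemma quadPoly_zero (d x : ι → R) : quadPoly 0 d x = d ⬝ᵥ x := by
  simp [quadPoly]

open Finset in
lemma card_filter_mulVec_eq_zero_s16 {F κ : Type*} [Field F] [Fintype F] [DecidableEq F]
    [DecidableEq ι] [Fintype κ] [DecidableEq κ] (M : Matrix κ ι F) :
    #{h | M *ᵥ h = 0} = Fintype.card F ^ (Fintype.card ι - M.rank) := by
  have hker : #{h | M *ᵥ h = 0} = Nat.card (LinearMap.ker M.mulVecLin) := by
    rw [← Fintype.card_subtype, ← Nat.card_eq_fintype_card]
    rfl
  have hdim := M.mulVecLin.finrank_range_add_finrank_ker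
  rw [Module.finrank_fintype_fun_eq_card] at hdim
  rw [hker, Module.natCard_eq_pow_finrank (K := F), Nat.card_eq_fintype_card, rank]
  congr 1
  omega

end Matrix

section WeylDifferencing

open Matrix Finset

variable {R ι : Type*} [CommRing R] [Fintype R] [DecidableEq R] [Fintype ι] [DecidableEq ι]
  {ψ : AddChar R ℂ}

lemma sum_quadPoly_mul_conj (hψ : ψ.IsPrimitive) (B : Matrix ι ι R) (d : ι → R) :
    (∑ x, ψ (quadPoly B d x)) * starRingEnd ℂ (∑ x, ψ (quadPoly B d x))
      = (Fintype.card R : ℂ) ^ Fintype.card ι *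
          ∑ h with (B + Bᵀ) *ᵥ h = 0, ψ (quadPoly B d h) := by
  rw [map_sum, sum_mul_sum, sum_comm]
  calc ∑ y, ∑ x, ψ (quadPoly B d x) * starRingEnd ℂ (ψ (quadPoly B d y))
      = ∑ y, ∑ h, ψ ((B + Bᵀ) *ᵥ h ⬝ᵥ y) * ψ (quadPoly B d h) := by
        refine Fintype.sum_congr _ _ fun y => ?_
        refine (Fintype.sum_equiv (Equiv.addLeft y) _ _ fun h => ?_).symm
        rw [Equiv.coe_addLeft, ← AddChar.map_add_eq_mul, ← quadPoly_add_sub, sub_eq_add_neg,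
          AddChar.map_add_eq_mul, AddChar.map_neg_eq_conj]
    _ = ∑ h, (∑ y, ψ ((B + Bᵀ) *ᵥ h ⬝ᵥ y)) * ψ (quadPoly B d h) := by
        rw [sum_comm]
        simp_rw [sum_mul]
    _ = _ := by
        simp_rw [AddChar.sum_dotProduct hψ, ite_mul, zero_mul, sum_ite, sum_const_zero, add_zero,
          mul_sum]

lemma norm_sum_quadPoly_sq_le (hψ : ψ.IsPrimitive) (B : Matrix ι ι R) (d : ι → R) :
    ‖∑ x, ψ (quadPoly B d x)‖ ^ 2
      ≤ (Fintype.card R : ℝ) ^ Fintype.card ι * #{h | (B + Bᵀ) *ᵥ h = 0} := by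
  calc ‖∑ x, ψ (quadPoly B d x)‖ ^ 2
      = ‖(Fintype.card R : ℂ) ^ Fintype.card ι *
          ∑ h with (B + Bᵀ) *ᵥ h = 0, ψ (quadPoly B d h)‖ := by
        rw [← sum_quadPoly_mul_conj hψ, norm_mul, Complex.norm_conj, sq]
    _ ≤ (Fintype.card R : ℝ) ^ Fintype.card ι *
          ∑ h with (B + Bᵀ) *ᵥ h = 0, ‖ψ (quadPoly B d h)‖ := by
        rw [norm_mul, norm_pow, Complex.norm_natCast]
        gcongr
        exact norm_sum_le _ _
    _ = _ := by simp


end WeylDifferencing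

open Matrix Finset in
lemma norm_sum_quadPoly_div_le {F ι : Type*} [Field F] [Fintype F] [DecidableEq F] [Fintype ι]
    [DecidableEq ι] {ψ : AddChar F ℂ} (hψ : ψ.IsPrimitive) (B : Matrix ι ι F) (d : ι → F)
    {r : ℕ} (hr : r ≤ (B + Bᵀ).rank) :
    ‖(∑ x, ψ (quadPoly B d x)) / (Fintype.card F : ℂ) ^ Fintype.card ι‖
      ≤ (√((Fintype.card F : ℝ) ^ r))⁻¹ := by
  set q := (Fintype.card F : ℝ)
  set n := Fintype.card ι
  set k := (B + Bᵀ).rank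
  have hq : 1 ≤ q := Nat.one_le_cast.2 Fintype.card_pos
  have hkn : k ≤ n := rank_le_card_width _
  rw [← Real.sqrt_inv, Real.le_sqrt (norm_nonneg _) (by positivity), norm_div, norm_pow,
    Complex.norm_natCast, div_pow]
  calc ‖∑ x, ψ (quadPoly B d x)‖ ^ 2 / (q ^ n) ^ 2
      ≤ q ^ n * q ^ (n - k) / (q ^ n) ^ 2 := by
        gcongr
        simpa [card_filter_mulVec_eq_zero_s16] using norm_sum_quadPoly_sq_le hψ B d
    _ = (q ^ k)⁻¹ := by
        rw [pow_sub₀ q (by positivity) hkn]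
        field_simp
    _ ≤ (q ^ r)⁻¹ := inv_anti₀ (by positivity) (pow_le_pow_right₀ hq hr)

lemma omegaP_pow_val (p : ℕ) [NeZero p] (t : ZMod p) :
    omegaP p ^ t.val = ZMod.stdAddChar t := by
  conv_rhs => rw [← ZMod.natCast_zmod_val t, ← Int.cast_natCast, ZMod.stdAddChar_coe]
  rw [omegaP, ← Complex.exp_nat_mul]
  push_cast
  ring_nf

lemma sum_col_mul_conj_col (p m : ℕ) [NeZero p] (A A' : Matrix (Fin m) (Fin m) (ZMod p))
    (c c' : Fin m → ZMod p) :
    ∑ x, col p m A c x * starRingEnd ℂ (col p m A' c' x)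
      = (∑ x, ZMod.stdAddChar ((A - A').quadPoly (c - c') x)) / (p : ℂ) ^ m := by
  have hsqrt : ((√((p : ℝ) ^ m) : ℝ) : ℂ) * (√((p : ℝ) ^ m) : ℝ) = (p : ℂ) ^ m := by
    rw [← Complex.ofReal_mul, Real.mul_self_sqrt (by positivity)]
    push_cast; rfl
  rw [Finset.sum_div]
  refine Fintype.sum_congr _ _ fun x => ?_
  simp only [col, omegaP_pow_val, map_div₀, Complex.conj_ofReal]
  rw [div_mul_div_comm, hsqrt, ← AddChar.map_neg_eq_conj, ← AddChar.map_add_eq_mul,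
    ← sub_eq_add_neg, ← Matrix.quadPoly_sub_quadPoly]
  rfl

theorem stmt16_general (p m L r : ℕ) [Fact p.Prime]
    (A : Fin L → Matrix (Fin m) (Fin m) (ZMod p))
    (hA : ∀ i j : Fin L, i ≠ j → r ≤ ((A i - A j) + (A i - A j)ᵀ).rank)
    (i j : Fin L) (c c' : Fin m → ZMod p) (hij : (i, c) ≠ (j, c')) :
    ‖(∑ x : Fin m → ZMod p,
        col p m (A i) c x * (starRingEnd ℂ) (col p m (A j) c' x))‖
      ≤ (Real.sqrt ((p : ℝ) ^ r))⁻¹ := by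
  have hψ := ZMod.isPrimitive_stdAddChar p
  rw [sum_col_mul_conj_col]
  by_cases hij' : i = j
  · subst hij'
    have hc : c - c' ≠ 0 := sub_ne_zero.2 fun h => hij (by rw [h])
    simp only [sub_self, Matrix.quadPoly_zero, AddChar.sum_dotProduct hψ, if_neg hc, zero_div,
      norm_zero]
    positivity
  · simpa using norm_sum_quadPoly_div_le hψ (A i - A j) (c - c') (hA i j hij')

theorem stmt16 (p m L r : ℕ) [Fact p.Prime] (hodd : Odd p) (hm : 0 < m)
    (A : Fin L → Matrix (Fin m) (Fin m) (ZMod p))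
    (hA : ∀ i j : Fin L, i ≠ j → r ≤ ((A i - A j) + (A i - A j)ᵀ).rank)
    (i j : Fin L) (c c' : Fin m → ZMod p) (hij : (i, c) ≠ (j, c')) :
    ‖(∑ x : Fin m → ZMod p,
        col p m (A i) c x * (starRingEnd ℂ) (col p m (A j) c' x))‖
      ≤ (Real.sqrt ((p : ℝ) ^ r))⁻¹ :=
  stmt16_general p m L r A hA i j c c' hij
end
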